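/- The tensor rank of the three-qubit W state |W⟩ = |100⟩ + |010⟩ + |001⟩ is exactly 3; that is, |W⟩ can be written as a sum of 3 product vectors but not as a sum of 2 product vectors in ℂ²⊗ℂ²⊗ℂ². -/

import Mathlib

open TensorProduct

/-- Tripartite tensor rank: minimal number of product vectors summing to `ψ`. -/
noncomputable def tRank {A B C : Type*} [AddCommGroup A] [Module ℂ A]
    [AddCommGroup B] [Module ℂ B] [AddCommGroup C] [Module ℂ C]
    (ψ : A ⊗[ℂ] (B ⊗[ℂ] C)) : ℕ :=
  sInf {r | ∃ (a : Fin r → A) (b : Fin r → B) (c : Fin r → C),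
    ψ = ∑ i, a i ⊗ₜ[ℂ] (b i ⊗ₜ[ℂ] c i)}

/-- ℂ², with basis indexed by `Bool`. -/
abbrev Q : Type := Bool → ℂ

noncomputable def q (b : Bool) : Q := Pi.single b 1

/-- The W state `|100⟩ + |010⟩ + |001⟩`. -/
noncomputable def Wstate : Q ⊗[ℂ] (Q ⊗[ℂ] Q) :=
  q true ⊗ₜ[ℂ] (q false ⊗ₜ[ℂ] q false) +
  q false ⊗ₜ[ℂ] (q true ⊗ₜ[ℂ] q false) +
  q false ⊗ₜ[ℂ] (q false ⊗ₜ[ℂ] q true)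

/-!
Slicing a tensor `ψ ∈ ℂ² ⊗ ℂ² ⊗ ℂ²` along the first factor gives a pencil of 2 × 2 matrices
`s M₀ + t M₁`. If `ψ = ∑ᵢ₌₁² aᵢ ⊗ bᵢ ⊗ cᵢ`, then `det (s M₀ + t M₁) = k ℓ₁(s,t) ℓ₂(s,t)` with
`ℓᵢ(s,t) = s aᵢ(0) + t aᵢ(1)` and `k = det [b₁ b₂] · det [c₁ c₂]`. For the W state
`M₀ = [[0,1],[1,0]]` and `M₁ = [[1,0],[0,0]]`, so this binary form is `-s²`; hence both `ℓᵢ` are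
multiples of `s`, i.e. `aᵢ(1) = 0`, contradicting the `|100⟩` coefficient of W being `1`.
-/

section Decompositions

variable {R A B C : Type*} [CommSemiring R] [AddCommMonoid A] [Module R A]
  [AddCommMonoid B] [Module R B] [AddCommMonoid C] [Module R C]

def IsSumOfProducts (ψ : A ⊗[R] (B ⊗[R] C)) (r : ℕ) : Prop :=
  ∃ (a : Fin r → A) (b : Fin r → B) (c : Fin r → C), ψ = ∑ i, a i ⊗ₜ[R] (b i ⊗ₜ[R] c i)

lemma IsSumOfProducts.succ {ψ : A ⊗[R] (B ⊗[R] C)} {r : ℕ} (h : IsSumOfProducts ψ r) :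
    IsSumOfProducts ψ (r + 1) := by
  obtain ⟨a, b, c, rfl⟩ := h
  exact ⟨Fin.snoc a 0, Fin.snoc b 0, Fin.snoc c 0, by simp [Fin.sum_univ_castSucc]⟩

lemma IsSumOfProducts.mono {ψ : A ⊗[R] (B ⊗[R] C)} {r s : ℕ} (h : IsSumOfProducts ψ r)
    (hrs : r ≤ s) : IsSumOfProducts ψ s := by
  induction s, hrs using Nat.le_induction with
  | base => exact h
  | succ s _ ih => exact ih.succ

end Decompositions

lemma tRank_eq_succ {A B C : Type*} [AddCommGroup A] [Module ℂ A] [AddCommGroup B] [Module ℂ B]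
    [AddCommGroup C] [Module ℂ C] {ψ : A ⊗[ℂ] (B ⊗[ℂ] C)} {n : ℕ}
    (h : IsSumOfProducts ψ (n + 1)) (h' : ¬ IsSumOfProducts ψ n) : tRank ψ = n + 1 := by
  refine le_antisymm (Nat.sInf_le h) (le_csInf ⟨_, h⟩ fun m hm => ?_)
  by_contra! hmn
  exact h' (IsSumOfProducts.mono hm (Nat.lt_succ_iff.mp hmn))

section Coefficients

variable {R ι : Type*} [CommRing R]

noncomputable def tensorCoeff (x y z : ι) : (ι → R) ⊗[R] ((ι → R) ⊗[R] (ι → R)) →ₗ[R] R :=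
  TensorProduct.lift ((LinearMap.mul R R).compl₁₂ (LinearMap.proj x)
    (TensorProduct.lift ((LinearMap.mul R R).compl₁₂ (LinearMap.proj y) (LinearMap.proj z))))

@[simp] lemma tensorCoeff_tmul (x y z : ι) (u v w : ι → R) :
    tensorCoeff x y z (u ⊗ₜ[R] (v ⊗ₜ[R] w)) = u x * (v y * w z) := by
  simp [tensorCoeff]

lemma tensorCoeff_sum {r : ℕ} (a b c : Fin r → ι → R) (x y z : ι) :
    tensorCoeff x y z (∑ i, a i ⊗ₜ[R] (b i ⊗ₜ[R] c i)) = ∑ i, a i x * (b i y * c i z) := by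
  simp

end Coefficients

section SliceMinors

variable {R : Type*} [CommRing R]

/-- `sliceMinor ψ x x` is the determinant of the slice `(y, z) ↦ ψ_{xyz}`; the sum
`sliceMinor ψ x x' + sliceMinor ψ x' x` is the mixed determinant of two slices. -/
noncomputable def sliceMinor (ψ : (Bool → R) ⊗[R] ((Bool → R) ⊗[R] (Bool → R))) (x x' : Bool) :
    R :=
  tensorCoeff x false false ψ * tensorCoeff x' true true ψ -
    tensorCoeff x false true ψ * tensorCoeff x' true false ψ

def det₂ (v : Fin 2 → Bool → R) : R := v 0 false * v 1 true - v 0 true * v 1 false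

variable (a b c : Fin 2 → Bool → R)

lemma sliceMinor_self_sum_two (x : Bool) :
    sliceMinor (∑ i, a i ⊗ₜ[R] (b i ⊗ₜ[R] c i)) x x = a 0 x * a 1 x * (det₂ b * det₂ c) := by
  simp only [sliceMinor, tensorCoeff_sum, det₂]
  simp only [Fin.sum_univ_two]
  ring

lemma sliceMinor_add_swap_sum_two (x x' : Bool) :
    sliceMinor (∑ i, a i ⊗ₜ[R] (b i ⊗ₜ[R] c i)) x x' +
        sliceMinor (∑ i, a i ⊗ₜ[R] (b i ⊗ₜ[R] c i)) x' x =
      (a 0 x * a 1 x' + a 0 x' * a 1 x) * (det₂ b * det₂ c) := by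
  simp only [sliceMinor, tensorCoeff_sum, det₂]
  simp only [Fin.sum_univ_two]
  ring

end SliceMinors

/-- If `(p₀ s + q₀ t) (p₁ s + q₁ t)` is a nonzero multiple of `s²`, then `q₀ = q₁ = 0`. -/
lemma eq_zero_of_mul_linear_forms_eq_sq {R : Type*} [CommRing R] [NoZeroDivisors R]
    {p₀ q₀ p₁ q₁ : R} (hp : p₀ * p₁ ≠ 0) (hq : q₀ * q₁ = 0) (hpq : p₀ * q₁ + q₀ * p₁ = 0) :
    q₀ = 0 ∧ q₁ = 0 := by
  obtain ⟨hp₀, hp₁⟩ := mul_ne_zero_iff.mp hp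
  rcases mul_eq_zero.mp hq with h₀ | h₁
  · subst h₀
    exact ⟨rfl, (mul_eq_zero.mp (by simpa using hpq)).resolve_left hp₀⟩
  · subst h₁
    exact ⟨(mul_eq_zero.mp (by simpa using hpq)).resolve_right hp₁, rfl⟩

lemma isSumOfProducts_Wstate_three : IsSumOfProducts Wstate 3 :=
  ⟨![q true, q false, q false], ![q false, q true, q false], ![q false, q false, q true],
    by simp [Wstate, Fin.sum_univ_three]⟩

lemma not_isSumOfProducts_Wstate_two : ¬ IsSumOfProducts Wstate 2 := by
  rintro ⟨a, b, c, hW⟩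
  have h₀₀ : a 0 false * a 1 false * (det₂ b * det₂ c) = -1 := by
    rw [← sliceMinor_self_sum_two, ← hW]
    simp [sliceMinor, Wstate, q]
  have h₁₁ : a 0 true * a 1 true * (det₂ b * det₂ c) = 0 := by
    rw [← sliceMinor_self_sum_two, ← hW]
    simp [sliceMinor, Wstate, q]
  have h₀₁ : (a 0 false * a 1 true + a 0 true * a 1 false) * (det₂ b * det₂ c) = 0 := by
    rw [← sliceMinor_add_swap_sum_two, ← hW]
    simp [sliceMinor, Wstate, q]
  have hk : det₂ b * det₂ c ≠ 0 := right_ne_zero_of_mul (by rw [h₀₀]; norm_num)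
  obtain ⟨ha₀, ha₁⟩ := eq_zero_of_mul_linear_forms_eq_sq (p₀ := a 0 false) (q₀ := a 0 true)
    (p₁ := a 1 false * (det₂ b * det₂ c)) (q₁ := a 1 true * (det₂ b * det₂ c))
    (by rw [← mul_assoc, h₀₀]; norm_num) (by rw [← mul_assoc, h₁₁]) (by rw [← h₀₁]; ring)
  have h₁₀₀ : tensorCoeff true false false Wstate = 0 := by
    rw [hW, tensorCoeff_sum, Fin.sum_univ_two, ha₀, (mul_eq_zero.mp ha₁).resolve_right hk]
    ring
  simp [Wstate, q] at h₁₀₀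

theorem rank_W_eq_three :
    (∃ (a b c : Fin 3 → Q), Wstate = ∑ i, a i ⊗ₜ[ℂ] (b i ⊗ₜ[ℂ] c i)) ∧
    ¬ (∃ (a b c : Fin 2 → Q), Wstate = ∑ i, a i ⊗ₜ[ℂ] (b i ⊗ₜ[ℂ] c i)) ∧
    tRank Wstate = 3 :=
  ⟨isSumOfProducts_Wstate_three, not_isSumOfProducts_Wstate_two,
    tRank_eq_succ isSumOfProducts_Wstate_three not_isSumOfProducts_Wstate_two⟩
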